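/- arXiv:1807.09933 — 3 statements merged into one kernel-verified Lean document; each statement's English description precedes it below -/
import Mathlib

section
/- Let f ∈ P₊ (a PL homeomorphism of ℝ with bounded slopes, fixing 0, equal to the identity near −∞) with [f] ≠ [id] in QI(ℝ). Then there exists a strictly increasing sequence bₙ → +∞ such that either (1) b_{n+1} > 3 f(bₙ) for all n and f(bₙ) − bₙ → +∞, or (2) b_{n+1} > 3 f⁻¹(bₙ) for all n and f⁻¹(bₙ) − bₙ → +∞. -/
/-- `f` is a `K`-quasi-isometric embedding. -/
def QIEmb {X Y : Type*} [PseudoMetricSpace X] [PseudoMetricSpace Y] (K : ℝ) (f : X → Y) : Prop :=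
  1 < K ∧ ∀ x₁ x₂ : X, dist x₁ x₂ / K - K ≤ dist (f x₁) (f x₂) ∧
    dist (f x₁) (f x₂) ≤ K * dist x₁ x₂ + K

/-- `f` is a `K`-quasi-isometry: a `K`-quasi-isometric embedding with `K`-dense image. -/
def QIsom {X Y : Type*} [PseudoMetricSpace X] [PseudoMetricSpace Y] (K : ℝ) (f : X → Y) : Prop :=
  QIEmb K f ∧ ∀ y : Y, ∃ x : X, dist (f x) y < K

/-- `f` is a quasi-isometry for some constant `K > 1`. -/
def IsQI {X Y : Type*} [PseudoMetricSpace X] [PseudoMetricSpace Y] (f : X → Y) : Prop :=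
  ∃ K : ℝ, QIsom K f

/-- Two maps are equivalent (close) if they are within bounded sup-distance. -/
def Close {X Y : Type*} [PseudoMetricSpace X] [PseudoMetricSpace Y] (f g : X → Y) : Prop :=
  ∃ M : ℝ, ∀ x : X, dist (f x) (g x) ≤ M

/-- `f` is piecewise linear: near every point it is affine on both sides
(so the break points form a discrete set). -/
def IsPL (f : ℝ → ℝ) : Prop :=
  ∀ x : ℝ, ∃ ε > (0:ℝ), ∃ a b c d : ℝ,
    (∀ t ∈ Set.Icc (x - ε) x, f t = a * t + b) ∧
    (∀ t ∈ Set.Icc x (x + ε), f t = c * t + d)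

/-- The set of slopes `Λ(f)` of a piecewise linear map. -/
def slopes (f : ℝ → ℝ) : Set ℝ :=
  {a : ℝ | ∃ b x y : ℝ, x < y ∧ ∀ t ∈ Set.Icc x y, f t = a * t + b}

/-- `f ∈ PL_δ(ℝ)`: a piecewise linear homeomorphism of `ℝ` whose slope set is bounded
away from `0` and `∞`. -/
def IsPLd (f : ℝ → ℝ) : Prop :=
  IsPL f ∧ Function.Bijective f ∧
    ∃ M : ℝ, 1 < M ∧ ∀ a ∈ slopes f, M⁻¹ < |a| ∧ |a| < M

/-- `f` is the identity near `-∞`. -/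
def IdNearNegInf (f : ℝ → ℝ) : Prop := ∃ N : ℝ, ∀ t ≤ N, f t = t

/-- `f` is the identity near `+∞`. -/
def IdNearPosInf (f : ℝ → ℝ) : Prop := ∃ N : ℝ, ∀ t ≥ N, f t = t

/-! `f` is a homeomorphism that is the identity near `-∞`, so `f - id` is continuous and
vanishes near `-∞`, and `[f] ≠ [id]` says it is unbounded. Hence `f - id` or `id - f` is unbounded
above, and, being bounded on compact intervals, it is unbounded above on every right tail. In the
second case so is `f⁻¹ - id`, because `t - f t = f⁻¹ s - s` for `s = f t` and `f t → ∞`.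
With `F` the map (`f` or `f⁻¹`) for which `F - id` is unbounded on every right tail,
the sequence is chosen inductively: `b (n + 1)` beyond `b n`, `3 F (b n)` and `n + 1`, with
`F (b (n + 1)) - b (n + 1) > n + 1`. -/

open Filter Set

theorem IsPL.continuous {f : ℝ → ℝ} (hf : IsPL f) : Continuous f := by
  refine continuous_iff_continuousAt.2 fun x => ?_
  obtain ⟨ε, hε, a, b, c, d, hleft, hright⟩ := hf x
  refine continuousAt_iff_continuous_left_right.2 ⟨?_, ?_⟩
  · refine (continuous_const_mul a |>.add continuous_const).continuousWithinAt.congr_of_eventuallyEq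
      ?_ (hleft x ⟨by linarith, le_rfl⟩)
    filter_upwards [Icc_mem_nhdsLE (by linarith : x - ε < x)] using hleft
  · refine (continuous_const_mul c |>.add continuous_const).continuousWithinAt.congr_of_eventuallyEq
      ?_ (hright x ⟨le_rfl, by linarith⟩)
    filter_upwards [Icc_mem_nhdsGE (by linarith : x < x + ε)] using hright

theorem IdNearNegInf.strictMono {f : ℝ → ℝ} (hf : IdNearNegInf f) (hc : Continuous f)
    (hinj : Function.Injective f) : StrictMono f := by
  obtain ⟨N, hN⟩ := hf
  refine (hc.strictMono_of_inj hinj).resolve_right fun hanti => ?_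
  have := hanti (sub_one_lt N)
  rw [hN N le_rfl, hN (N - 1) (by linarith)] at this
  linarith

theorem not_bddAbove_sub_or_of_not_close_id {f : ℝ → ℝ} (hf : ¬ Close f id) :
    ¬ BddAbove (range fun t => f t - t) ∨ ¬ BddAbove (range fun t => t - f t) := by
  contrapose! hf
  obtain ⟨⟨A, hA⟩, ⟨B, hB⟩⟩ := hf
  refine ⟨max A B, fun t => ?_⟩
  rw [Real.dist_eq, id, abs_le]
  have := hA (mem_range_self t)
  have := hB (mem_range_self t)
  constructor <;> linarith [le_max_left A B, le_max_right A B]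

theorem Continuous.frequently_atTop_lt_of_not_bddAbove {g : ℝ → ℝ} (hg : Continuous g) {N : ℝ}
    (hbot : BddAbove (g '' Iic N)) (hub : ¬ BddAbove (range g)) (C : ℝ) :
    ∃ᶠ t in atTop, C < g t := by
  rw [frequently_atTop]
  by_contra! htop
  obtain ⟨T, hT⟩ := htop
  refine hub ((hbot.union ((isCompact_Icc (a := N) (b := T)).bddAbove_image hg.continuousOn)).union
    (bddAbove_def.2 ⟨C, forall_mem_image.2 hT⟩) |>.mono ?_)
  rintro _ ⟨t, rfl⟩
  rcases le_total t N with htN | hNt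
  · exact .inl (.inl ⟨t, htN, rfl⟩)
  rcases le_total t T with htT | hTt
  · exact .inl (.inr ⟨t, ⟨hNt, htT⟩, rfl⟩)
  · exact .inr ⟨t, hTt, rfl⟩

theorem frequently_lt_inv_sub {f finv : ℝ → ℝ} (hf : Monotone f)
    (hli : Function.LeftInverse finv f) (hri : Function.RightInverse finv f) {C : ℝ}
    (h : ∃ᶠ t in atTop, C < t - f t) : ∃ᶠ s in atTop, C < finv s - s := by
  have hf_tendsto : Tendsto f atTop atTop :=
    tendsto_atTop_atTop_of_monotone hf fun s => ⟨finv s, (hri s).ge⟩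
  exact hf_tendsto.frequently (h.mono fun t ht => by rwa [hli t])

theorem exists_escape_seq {F : ℝ → ℝ} (h : ∀ C, ∃ᶠ t in atTop, C < F t - t) :
    ∃ b : ℕ → ℝ, StrictMono b ∧ Tendsto b atTop atTop ∧
      (∀ n, 3 * F (b n) < b (n + 1)) ∧ Tendsto (fun n => F (b n) - b n) atTop atTop := by
  have step (n : ℕ) (x : ℝ) : ∃ y, max (max x (3 * F x)) n < y ∧ (n : ℝ) < F y - y :=
    ((h n).and_eventually (eventually_gt_atTop _)).exists.imp fun _ hy => ⟨hy.2, hy.1⟩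
  choose next hnext_gt hnext_sub using step
  let b : ℕ → ℝ := fun n => Nat.rec (next 0 0) (fun n x => next (n + 1) x) n
  have hb_succ (n : ℕ) : b (n + 1) = next (n + 1) (b n) := rfl
  have hb_gt (n : ℕ) : max (max (b n) (3 * F (b n))) (n + 1 : ℕ) < b (n + 1) :=
    hb_succ n ▸ hnext_gt _ _
  have hb_sub (n : ℕ) : (n : ℝ) < F (b n) - b n := by
    cases n with
    | zero => exact hnext_sub 0 0
    | succ n => exact hb_succ n ▸ hnext_sub _ _
  refine ⟨b, strictMono_nat_of_lt_succ fun n => ?_, ?_, fun n => ?_, ?_⟩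
  · exact (le_max_left _ _).trans (le_max_left _ _) |>.trans_lt (hb_gt n)
  · refine (tendsto_add_atTop_iff_nat 1).1 (tendsto_atTop_mono (fun n => ?_)
      (tendsto_natCast_atTop_atTop.comp (tendsto_add_atTop_nat 1)))
    exact (le_max_right _ _).trans_lt (hb_gt n) |>.le
  · exact (le_max_right _ _).trans (le_max_left _ _) |>.trans_lt (hb_gt n)
  · exact tendsto_atTop_mono (fun n => (hb_sub n).le) tendsto_natCast_atTop_atTop

open Filter in
theorem escape_sequence_general (f finv : ℝ → ℝ) (hf : IsPLd f)
    (hneg : IdNearNegInf f) (hnontriv : ¬ Close f (id : ℝ → ℝ))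
    (hli : Function.LeftInverse finv f) (hri : Function.RightInverse finv f) :
    ∃ b : ℕ → ℝ, StrictMono b ∧ Tendsto b atTop atTop ∧
      (((∀ n : ℕ, 3 * f (b n) < b (n + 1)) ∧
          Tendsto (fun n => f (b n) - b n) atTop atTop) ∨
       ((∀ n : ℕ, 3 * finv (b n) < b (n + 1)) ∧
          Tendsto (fun n => finv (b n) - b n) atTop atTop)) := by
  obtain ⟨hPL, hbij, -⟩ := hf
  have hcont := hPL.continuous
  have hmono := hneg.strictMono hcont hbij.injective
  obtain ⟨N, hN⟩ := hneg
  have hbot {g : ℝ → ℝ} (hg : ∀ t ≤ N, g t = 0) : BddAbove (g '' Iic N) :=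
    ⟨0, forall_mem_image.2 fun t ht => (hg t ht).le⟩
  rcases not_bddAbove_sub_or_of_not_close_id hnontriv with hup | hdown
  · obtain ⟨b, hb_mono, hb_tendsto, hb_gap, hb_escape⟩ := exists_escape_seq fun C =>
      (hcont.sub continuous_id).frequently_atTop_lt_of_not_bddAbove
        (hbot fun t ht => sub_eq_zero.2 (hN t ht)) hup C
    exact ⟨b, hb_mono, hb_tendsto, .inl ⟨hb_gap, hb_escape⟩⟩
  · obtain ⟨b, hb_mono, hb_tendsto, hb_gap, hb_escape⟩ := exists_escape_seq fun C =>
      frequently_lt_inv_sub hmono.monotone hli hri <|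
        (continuous_id.sub hcont).frequently_atTop_lt_of_not_bddAbove
          (hbot fun t ht => sub_eq_zero.2 (hN t ht).symm) hdown C
    exact ⟨b, hb_mono, hb_tendsto, .inr ⟨hb_gap, hb_escape⟩⟩

open Filter in
/-- For `f ∈ P₊` with `[f] ≠ [id]` there is a strictly increasing sequence `bₙ → ∞` with
either `b_{n+1} > 3 f(bₙ)` and `f(bₙ) − bₙ → ∞`, or the same for `f⁻¹`. -/
theorem escape_sequence (f finv : ℝ → ℝ) (hf : IsPLd f) (h0 : f 0 = 0)
    (hneg : IdNearNegInf f) (hnontriv : ¬ Close f (id : ℝ → ℝ))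
    (hli : Function.LeftInverse finv f) (hri : Function.RightInverse finv f) :
    ∃ b : ℕ → ℝ, StrictMono b ∧ Tendsto b atTop atTop ∧
      (((∀ n : ℕ, 3 * f (b n) < b (n + 1)) ∧
          Tendsto (fun n => f (b n) - b n) atTop atTop) ∨
       ((∀ n : ℕ, 3 * finv (b n) < b (n + 1)) ∧
          Tendsto (fun n => finv (b n) - b n) atTop atTop)) :=
  escape_sequence_general f finv hf hneg hnontriv hli hri
end

section
/- The center of the subgroup Q₊ of QI(ℝ) is trivial. -/
/-!
Suppose `f` is not at bounded distance from the identity. Being the identity near `-∞`, its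
displacement is then unbounded towards `+∞`, so one finds points `tₙ → ∞` with
`|f tₙ - tₙ| ≥ 2 eₙ`, `eₙ ≥ n`. Let `g` be the identity plus a sum of disjoint PL tents, the
`n`-th of height `eₙ` peaking at `f tₙ` and vanishing at `tₙ`. Then `g ∈ Q₊` fixes `tₙ`, so
`f (g tₙ) = f tₙ` while `g (f tₙ) = f tₙ + eₙ`, and `f ∘ g`, `g ∘ f` are not close.
-/

open Set Filter Topology Function

def EventuallyAffine (l : Filter ℝ) (f : ℝ → ℝ) : Prop :=
  ∃ a b : ℝ, ∀ᶠ t in l, f t = a * t + b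

lemma eventually_affine_nonpos_or_nonneg {l : Filter ℝ} {x : ℝ} (hl : l ≤ 𝓝 x)
    (hside : (∀ᶠ t in l, t ≤ x) ∨ ∀ᶠ t in l, x ≤ t) (k m : ℝ) :
    (∀ᶠ t in l, k * t + m ≤ 0) ∨ ∀ᶠ t in l, 0 ≤ k * t + m := by
  have hcont : Continuous fun t => k * t + m := by fun_prop
  rcases lt_trichotomy (k * x + m) 0 with h | h | h
  · exact Or.inl (((hcont.tendsto x).eventually (eventually_le_nhds h)).filter_mono hl)
  · have hkm : ∀ t, k * t + m = k * (t - x) := fun t => by linear_combination h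
    simp only [hkm]
    rcases hside with hs | hs <;> rcases le_total k 0 with hk | hk
    · exact Or.inr (hs.mono fun t ht => mul_nonneg_of_nonpos_of_nonpos hk (by linarith))
    · exact Or.inl (hs.mono fun t ht => mul_nonpos_of_nonneg_of_nonpos hk (by linarith))
    · exact Or.inl (hs.mono fun t ht => mul_nonpos_of_nonpos_of_nonneg hk (by linarith))
    · exact Or.inr (hs.mono fun t ht => mul_nonneg hk (by linarith))
  · exact Or.inr (((hcont.tendsto x).eventually (eventually_ge_nhds h)).filter_mono hl)

namespace EventuallyAffine

variable {l : Filter ℝ} {x : ℝ} {f g : ℝ → ℝ}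

lemma congr (hf : EventuallyAffine l f) (h : f =ᶠ[l] g) : EventuallyAffine l g := by
  obtain ⟨a, b, hf⟩ := hf
  exact ⟨a, b, by filter_upwards [h, hf] with t h1 h2; rw [← h1, h2]⟩

lemma add (hf : EventuallyAffine l f) (hg : EventuallyAffine l g) :
    EventuallyAffine l fun t => f t + g t := by
  obtain ⟨a, b, hf⟩ := hf
  obtain ⟨c, d, hg⟩ := hg
  exact ⟨a + c, b + d, by filter_upwards [hf, hg] with t h1 h2; rw [h1, h2]; ring⟩

lemma max (hl : l ≤ 𝓝 x) (hside : (∀ᶠ t in l, t ≤ x) ∨ ∀ᶠ t in l, x ≤ t)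
    (hf : EventuallyAffine l f) (hg : EventuallyAffine l g) :
    EventuallyAffine l fun t => max (f t) (g t) := by
  obtain ⟨a, b, hf⟩ := hf
  obtain ⟨c, d, hg⟩ := hg
  rcases eventually_affine_nonpos_or_nonneg hl hside (a - c) (b - d) with h | h
  · exact ⟨c, d, by
      filter_upwards [hf, hg, h] with t h1 h2 h3
      rw [h1, h2, max_eq_right (by linarith)]⟩
  · exact ⟨a, b, by
      filter_upwards [hf, hg, h] with t h1 h2 h3
      rw [h1, h2, max_eq_left (by linarith)]⟩

lemma min (hl : l ≤ 𝓝 x) (hside : (∀ᶠ t in l, t ≤ x) ∨ ∀ᶠ t in l, x ≤ t)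
    (hf : EventuallyAffine l f) (hg : EventuallyAffine l g) :
    EventuallyAffine l fun t => min (f t) (g t) := by
  obtain ⟨a, b, hf⟩ := hf
  obtain ⟨c, d, hg⟩ := hg
  rcases eventually_affine_nonpos_or_nonneg hl hside (a - c) (b - d) with h | h
  · exact ⟨a, b, by
      filter_upwards [hf, hg, h] with t h1 h2 h3
      rw [h1, h2, min_eq_left (by linarith)]⟩
  · exact ⟨c, d, by
      filter_upwards [hf, hg, h] with t h1 h2 h3
      rw [h1, h2, min_eq_right (by linarith)]⟩

lemma continuousWithinAt {s : Set ℝ} (hx : x ∈ s) (hf : EventuallyAffine (𝓝[s] x) f) :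
    ContinuousWithinAt f s x := by
  obtain ⟨a, b, hf⟩ := hf
  exact (continuous_const.mul continuous_id |>.add continuous_const).continuousWithinAt
    |>.congr_of_eventuallyEq hf (hf.self_of_nhdsWithin hx)

end EventuallyAffine

lemma isPL_iff {f : ℝ → ℝ} :
    IsPL f ↔ ∀ x, EventuallyAffine (𝓝[≤] x) f ∧ EventuallyAffine (𝓝[≥] x) f := by
  refine ⟨fun hf x => ?_, fun hf x => ?_⟩
  · obtain ⟨ε, hε, a, b, c, d, hl, hr⟩ := hf x
    exact ⟨⟨a, b, mem_of_superset (Icc_mem_nhdsLE (by linarith)) hl⟩,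
      ⟨c, d, mem_of_superset (Icc_mem_nhdsGE (by linarith)) hr⟩⟩
  · obtain ⟨⟨a, b, hl⟩, ⟨c, d, hr⟩⟩ := hf x
    obtain ⟨u, hu, hul⟩ := mem_nhdsLE_iff_exists_Icc_subset.1 hl
    obtain ⟨v, hv, hvr⟩ := mem_nhdsGE_iff_exists_Icc_subset.1 hr
    refine ⟨min (x - u) (v - x), lt_min (by linarith) (by linarith), a, b, c, d,
      fun t ht => hul ⟨?_, ht.2⟩, fun t ht => hvr ⟨ht.1, ?_⟩⟩
    · linarith [ht.1, min_le_left (x - u) (v - x)]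
    · linarith [ht.2, min_le_right (x - u) (v - x)]

namespace IsPL

variable {f g : ℝ → ℝ}

lemma of_eventuallyEq (h : ∀ x, ∃ φ, IsPL φ ∧ φ =ᶠ[𝓝 x] f) : IsPL f := by
  refine isPL_iff.2 fun x => ?_
  obtain ⟨φ, hφ, hφf⟩ := h x
  obtain ⟨hl, hr⟩ := isPL_iff.1 hφ x
  exact ⟨hl.congr (hφf.filter_mono nhdsWithin_le_nhds),
    hr.congr (hφf.filter_mono nhdsWithin_le_nhds)⟩

lemma add (hf : IsPL f) (hg : IsPL g) : IsPL fun t => f t + g t :=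
  isPL_iff.2 fun x => ⟨((isPL_iff.1 hf x).1.add (isPL_iff.1 hg x).1),
    ((isPL_iff.1 hf x).2.add (isPL_iff.1 hg x).2)⟩

lemma max (hf : IsPL f) (hg : IsPL g) : IsPL fun t => max (f t) (g t) :=
  isPL_iff.2 fun x =>
    ⟨(isPL_iff.1 hf x).1.max nhdsWithin_le_nhds (.inl self_mem_nhdsWithin) (isPL_iff.1 hg x).1,
      (isPL_iff.1 hf x).2.max nhdsWithin_le_nhds (.inr self_mem_nhdsWithin) (isPL_iff.1 hg x).2⟩

lemma min (hf : IsPL f) (hg : IsPL g) : IsPL fun t => min (f t) (g t) :=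
  isPL_iff.2 fun x =>
    ⟨(isPL_iff.1 hf x).1.min nhdsWithin_le_nhds (.inl self_mem_nhdsWithin) (isPL_iff.1 hg x).1,
      (isPL_iff.1 hf x).2.min nhdsWithin_le_nhds (.inr self_mem_nhdsWithin) (isPL_iff.1 hg x).2⟩

protected lemma continuous_s18 (hf : IsPL f) : Continuous f :=
  continuous_iff_continuousAt.2 fun x => continuousAt_iff_continuous_left_right.2
    ⟨(isPL_iff.1 hf x).1.continuousWithinAt self_mem_Iic,
      (isPL_iff.1 hf x).2.continuousWithinAt self_mem_Ici⟩

end IsPL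

lemma isPL_affine (a b : ℝ) : IsPL fun t => a * t + b :=
  fun _ => ⟨1, one_pos, a, b, a, b, fun _ _ => rfl, fun _ _ => rfl⟩

lemma isPL_id : IsPL fun t : ℝ => t := by
  simpa using isPL_affine 1 0

noncomputable def tent (l e x : ℝ) : ℝ := max 0 (min (x - l) ((l + 3 * e - x) / 2))

section tent

variable {l e x y : ℝ}

lemma tent_nonneg : 0 ≤ tent l e x := le_max_left _ _

lemma tent_eq_zero (h : x ≤ l ∨ l + 3 * e ≤ x) : tent l e x = 0 := by
  unfold tent
  rcases h with h | h
  · exact max_eq_left (min_le_of_left_le (by linarith))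
  · exact max_eq_left (min_le_of_right_le (by linarith))

lemma tent_peak (he : 0 ≤ e) : tent l e (l + e) = e := by
  rw [tent, min_eq_left (by linarith), max_eq_right (by linarith)]
  ring

lemma tent_sub_tent_le (hxy : x ≤ y) : tent l e y - tent l e x ≤ y - x := by
  simp only [tent, max_def, min_def]
  split_ifs <;> linarith

lemma tent_sub_tent_le_half (hxy : x ≤ y) : tent l e x - tent l e y ≤ (y - x) / 2 := by
  simp only [tent, max_def, min_def]
  split_ifs <;> linarith

lemma isPL_tent : IsPL (tent l e) := by
  have h := (isPL_affine 0 0).max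
    ((isPL_affine 1 (-l)).min (isPL_affine (-(1 / 2)) ((l + 3 * e) / 2)))
  convert h using 2 with x
  simp only [tent]
  ring_nf

end tent

structure TentData where
  l : ℕ → ℝ
  e : ℕ → ℝ
  e_nonneg : ∀ n, 0 ≤ e n
  r_lt_l_succ : ∀ n, l n + 3 * e n < l (n + 1)
  exists_lt_l : ∀ x, ∃ n, x < l n

namespace TentData

variable (T : TentData)

def r (n : ℕ) : ℝ := T.l n + 3 * T.e n

noncomputable def bump (x : ℝ) : ℝ := ∑' n, tent (T.l n) (T.e n) x

noncomputable def g (x : ℝ) : ℝ := x + T.bump x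

lemma l_le_r (n : ℕ) : T.l n ≤ T.r n := by
  have := T.e_nonneg n
  unfold r; linarith

lemma l_strictMono : StrictMono T.l :=
  strictMono_nat_of_lt_succ fun n => (T.l_le_r n).trans_lt (T.r_lt_l_succ n)

lemma r_lt_l {m n : ℕ} (h : m < n) : T.r m < T.l n :=
  (T.r_lt_l_succ m).trans_le (T.l_strictMono.monotone h)

lemma exists_index (x : ℝ) : ∃ n, x < T.l (n + 1) ∧ ∀ m < n, T.r m < x := by
  classical
  have hex : ∃ n, x < T.l (n + 1) := by
    obtain ⟨n, hn⟩ := T.exists_lt_l x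
    exact ⟨n, hn.trans (T.l_strictMono (Nat.lt_succ_self n))⟩
  refine ⟨Nat.find hex, Nat.find_spec hex, fun m hm => ?_⟩
  exact (T.r_lt_l_succ m).trans_le (not_lt.1 (Nat.find_min hex hm))

variable {T}

lemma tent_eq_zero_of_ne {n m : ℕ} {y : ℝ} (h₁ : y < T.l (n + 1)) (h₂ : ∀ m < n, T.r m < y)
    (hmn : m ≠ n) : tent (T.l m) (T.e m) y = 0 := by
  refine tent_eq_zero ?_
  rcases lt_or_gt_of_ne hmn with h | h
  · exact .inr (h₂ m h).le
  · exact .inl (h₁.le.trans (T.l_strictMono.monotone h))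

lemma bump_eq_tent {n : ℕ} {y : ℝ} (h₁ : y < T.l (n + 1)) (h₂ : ∀ m < n, T.r m < y) :
    T.bump y = tent (T.l n) (T.e n) y :=
  tsum_eq_single n fun _ => tent_eq_zero_of_ne h₁ h₂

lemma tent_le_bump (n : ℕ) (y : ℝ) : tent (T.l n) (T.e n) y ≤ T.bump y := by
  obtain ⟨k, h₁, h₂⟩ := T.exists_index y
  rw [bump_eq_tent h₁ h₂]
  rcases eq_or_ne n k with rfl | hnk
  · exact le_rfl
  · rw [tent_eq_zero_of_ne h₁ h₂ hnk]
    exact tent_nonneg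

lemma bump_eq_zero {y : ℝ} (h : ∀ m, y ≤ T.l m ∨ T.r m ≤ y) : T.bump y = 0 := by
  simp only [bump, tent_eq_zero (h _), tsum_zero]

lemma g_sub_g_le {x y : ℝ} (hxy : x ≤ y) : T.g y - T.g x ≤ 2 * (y - x) := by
  obtain ⟨n, h₁, h₂⟩ := T.exists_index y
  have := tent_le_bump (T := T) n x
  have := tent_sub_tent_le (l := T.l n) (e := T.e n) hxy
  rw [g, g, bump_eq_tent h₁ h₂]
  linarith

lemma half_le_g_sub_g {x y : ℝ} (hxy : x ≤ y) : (y - x) / 2 ≤ T.g y - T.g x := by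
  obtain ⟨n, h₁, h₂⟩ := T.exists_index x
  have := tent_le_bump (T := T) n y
  have := tent_sub_tent_le_half (l := T.l n) (e := T.e n) hxy
  rw [g, g, bump_eq_tent h₁ h₂]
  linarith

lemma g_eq_self {y : ℝ} (h : ∀ m, y ≤ T.l m ∨ T.r m ≤ y) : T.g y = y := by
  rw [g, bump_eq_zero h, add_zero]

lemma g_eq_self_of_le {y : ℝ} (h : y ≤ T.l 0) : T.g y = y :=
  g_eq_self fun m => .inl (h.trans (T.l_strictMono.monotone m.zero_le))

lemma g_peak (n : ℕ) : T.g (T.l n + T.e n) = T.l n + 2 * T.e n := by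
  have h₁ : T.l n + T.e n < T.l (n + 1) := by
    have := T.r_lt_l_succ n; have := T.e_nonneg n; linarith
  have h₂ : ∀ m < n, T.r m < T.l n + T.e n := fun m hm => by
    have := T.r_lt_l hm; have := T.e_nonneg n; linarith
  rw [g, bump_eq_tent h₁ h₂, tent_peak (T.e_nonneg n)]
  ring

lemma isPL_bump : IsPL T.bump := by
  refine IsPL.of_eventuallyEq fun x => ?_
  obtain ⟨n, h₁, h₂⟩ := T.exists_index x
  refine ⟨tent (T.l n) (T.e n), isPL_tent, ?_⟩
  have hlt : ∀ᶠ y in 𝓝 x, y < T.l (n + 1) := eventually_lt_nhds h₁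
  have hgt : ∀ᶠ y in 𝓝 x, ∀ m ∈ Iio n, T.r m < y :=
    (eventually_all_finite (finite_Iio n)).2 fun m hm => eventually_gt_nhds (h₂ m hm)
  filter_upwards [hlt, hgt] with y hy₁ hy₂
  exact (bump_eq_tent hy₁ hy₂).symm

lemma continuous_g : Continuous T.g :=
  continuous_id.add T.isPL_bump.continuous_s18

lemma strictMono_g : StrictMono T.g := fun x y hxy => by
  have := half_le_g_sub_g (T := T) hxy.le
  linarith

lemma bijective_g : Bijective T.g := by
  refine ⟨T.strictMono_g.injective, T.continuous_g.surjective ?_ ?_⟩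
  · refine tendsto_atTop_mono (fun x => ?_) tendsto_id
    have := tent_le_bump (T := T) 0 x
    have := tent_nonneg (l := T.l 0) (e := T.e 0) (x := x)
    simp only [g, id]; linarith
  · refine tendsto_id.congr' ?_
    filter_upwards [eventually_le_atBot (T.l 0)] with y hy
    exact (g_eq_self_of_le hy).symm

lemma isPLd_g : IsPLd T.g := by
  refine ⟨isPL_id.add T.isPL_bump, T.bijective_g, 4, by norm_num, ?_⟩
  rintro a ⟨b, x, y, hxy, hab⟩
  have h₁ := g_sub_g_le (T := T) hxy.le
  have h₂ := half_le_g_sub_g (T := T) hxy.le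
  rw [hab x ⟨le_rfl, hxy.le⟩, hab y ⟨hxy.le, le_rfl⟩] at h₁ h₂
  have ha₁ : 1 / 2 ≤ a := by nlinarith
  have ha₂ : a ≤ 2 := by nlinarith
  rw [abs_of_pos (by linarith)]
  constructor <;> linarith

end TentData

namespace IdNearNegInf

variable {f : ℝ → ℝ}

lemma strictMono_s18 (hneg : IdNearNegInf f) (hc : Continuous f) (hinj : Injective f) :
    StrictMono f := by
  obtain ⟨N, hN⟩ := hneg
  refine (hc.strictMono_of_inj hinj).resolve_right fun hanti => ?_
  have := hanti (show N - 1 < N by linarith)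
  rw [hN N le_rfl, hN _ (by linarith)] at this
  linarith

lemma exists_abs_sub_le (hneg : IdNearNegInf f) (hc : Continuous f) (A : ℝ) :
    ∃ K, ∀ t ≤ A, |f t - t| ≤ K := by
  obtain ⟨N, hN⟩ := hneg
  obtain ⟨K, hK⟩ := (isCompact_Icc (a := N) (b := A)).exists_bound_of_continuousOn
    (hc.sub continuous_id).continuousOn
  refine ⟨max K 0, fun t ht => ?_⟩
  rcases le_or_gt t N with h | h
  · simp [hN t h]
  · exact (hK t ⟨h.le, ht⟩).trans (le_max_left K 0)

lemma exists_far_point (hneg : IdNearNegInf f) (hc : Continuous f) (hmono : Monotone f)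
    (hsurj : Surjective f) (hfar : ¬ Close f id) (R c : ℝ) :
    ∃ t, R < t ∧ R + c ≤ f t ∧ 2 * c ≤ |f t - t| := by
  obtain ⟨u, hu⟩ := hsurj (R + c)
  obtain ⟨K, hK⟩ := hneg.exists_abs_sub_le hc (max u R)
  obtain ⟨t, ht⟩ : ∃ t, max K (2 * c) < |f t - t| := by
    by_contra! h
    exact hfar ⟨max K (2 * c), fun t => by simpa [Real.dist_eq] using h t⟩
  have htu : max u R < t := not_le.1 fun h => by
    have := hK t h
    have := le_max_left K (2 * c)
    linarith
  refine ⟨t, (le_max_right u R).trans_lt htu, ?_, (le_max_right K _).trans ht.le⟩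
  exact hu ▸ hmono ((le_max_left u R).trans htu.le)

end IdNearNegInf

lemma exists_tentData_of_far {f : ℝ → ℝ}
    (hfar : ∀ R c : ℝ, ∃ t, R < t ∧ R + c ≤ f t ∧ 2 * c ≤ |f t - t|) :
    ∃ (T : TentData) (t : ℕ → ℝ), 0 ≤ T.l 0 ∧ ∀ n : ℕ, (n : ℝ) ≤ T.e n ∧
      f (t n) = T.l n + T.e n ∧ ∀ m, t n ≤ T.l m ∨ T.r m ≤ t n := by
  choose s hs_gt hs_le hs_abs using fun R : ℝ => hfar R (R + 1)
  -- Beyond `R` we put the tent over `[f (s R) - (R + 1), f (s R) + 2 (R + 1)]`;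
  -- the next one starts beyond `F R`.
  set F : ℝ → ℝ := fun R => max (s R) (f (s R) + 2 * (R + 1)) + 1 with hF
  set R : ℕ → ℝ := fun n => F^[n] 0 with hR
  have hR_succ (n : ℕ) : R (n + 1) = F (R n) := iterate_succ_apply' F n 0
  have hs_le_F (x : ℝ) : s x + 1 ≤ F x := by simp [hF]
  have hr_le_F (x : ℝ) : f (s x) + 2 * (x + 1) + 1 ≤ F x := by simp [hF]
  have hR_mono : Monotone R := monotone_nat_of_le_succ fun n => by
    rw [hR_succ]; linarith [hs_gt (R n), hs_le_F (R n)]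
  have hR_ge (n : ℕ) : (n : ℝ) ≤ R n := by
    induction n with
    | zero => simp [hR]
    | succ n ih => rw [hR_succ]; push_cast; linarith [hs_gt (R n), hs_le_F (R n)]
  have hR_nonneg (n : ℕ) : 0 ≤ R n := n.cast_nonneg.trans (hR_ge n)
  have hR_le_l (n : ℕ) : R n ≤ f (s (R n)) - (R n + 1) := by linarith [hs_le (R n)]
  let T : TentData :=
    { l := fun n => f (s (R n)) - (R n + 1)
      e := fun n => R n + 1
      e_nonneg := fun n => by linarith [hR_nonneg n]
      r_lt_l_succ := fun n => by
        have := hR_le_l (n + 1); rw [hR_succ] at this ⊢; linarith [hr_le_F (R n)]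
      exists_lt_l := fun x => by
        obtain ⟨n, hn⟩ := exists_nat_gt x
        exact ⟨n, hn.trans_le ((hR_ge n).trans (hR_le_l n))⟩ }
  have hF_le {m n : ℕ} (h : m < n) : F (R m) ≤ R n := hR_succ m ▸ hR_mono h
  refine ⟨T, fun n => s (R n), (hR_le_l 0).trans' (by simp [hR]),
    fun n => ⟨?_, ?_, fun m => ?_⟩⟩
  · simp only [T]; linarith [hR_ge n]
  · simp only [T]; ring
  simp only [T, TentData.r]
  rcases lt_trichotomy m n with h | rfl | h
  · right; linarith [hF_le h, hr_le_F (R m), hs_gt (R n)]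
  · rcases le_abs'.1 (hs_abs (R m)) with h | h
    · right; linarith
    · left; linarith [hR_nonneg m]
  · left; linarith [hF_le h, hs_le_F (R n), hR_le_l m]

theorem center_Qplus_trivial_general (f : ℝ → ℝ) (hf : IsPLd f)
    (hneg : IdNearNegInf f)
    (hcentral : ∀ g : ℝ → ℝ, IsPLd g → g 0 = 0 → IdNearNegInf g →
      Close (f ∘ g) (g ∘ f)) :
    Close f (id : ℝ → ℝ) := by
  by_contra hfar
  obtain ⟨hPL, hbij, -⟩ := hf
  have hc := hPL.continuous_s18
  have hmono := (hneg.strictMono_s18 hc hbij.1).monotone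
  obtain ⟨T, t, hl₀, ht⟩ :=
    exists_tentData_of_far (hneg.exists_far_point hc hmono hbij.2 hfar)
  obtain ⟨M, hM⟩ :=
    hcentral T.g T.isPLd_g (T.g_eq_self_of_le hl₀) ⟨T.l 0, fun _ => T.g_eq_self_of_le⟩
  obtain ⟨n, hn⟩ := exists_nat_gt M
  obtain ⟨hen, hpeak, hout⟩ := ht n
  have hdist := hM (t n)
  rw [comp_apply, comp_apply, T.g_eq_self hout, hpeak, T.g_peak, Real.dist_eq,
    show T.l n + T.e n - (T.l n + 2 * T.e n) = -T.e n by ring, abs_neg,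
    abs_of_nonneg (T.e_nonneg n)] at hdist
  linarith

/-- The center of the subgroup `Q₊ ⊆ QI(ℝ)` (classes of PL homeomorphisms with bounded
slopes, fixing `0`, equal to the identity near `-∞`) is trivial. -/
theorem center_Qplus_trivial (f : ℝ → ℝ) (hf : IsPLd f) (h0 : f 0 = 0)
    (hneg : IdNearNegInf f)
    (hcentral : ∀ g : ℝ → ℝ, IsPLd g → g 0 = 0 → IdNearNegInf g →
      Close (f ∘ g) (g ∘ f)) :
    Close f (id : ℝ → ℝ) :=
  center_Qplus_trivial_general f hf hneg hcentral
end

section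
/- The center of the group QI(ℝ) of quasi-isometry classes of the real line is trivial. -/
/-!
Commuting up to bounded error with every homothety `x ↦ t x` forces `f` to be close to a
linear map `x ↦ c x` (Hyers–Ulam: `c x` is the limit of `f (2ⁿ x) / 2ⁿ`), and `c ≠ 0` because
`f` is a quasi-isometry. Then `x ↦ c x` itself commutes up to bounded error with the
bi-Lipschitz maps `x ↦ x + |x| / 8 · sin (ω log x)`, whose perturbation is log-periodic.
Evaluating along the points where `ω log x ≡ π / 2 (mod 2π)` gives `c = |c| cos (ω log |c|)`;
for `ω = 1` and `ω = √2` this forces `log |c| = 0`, as `√2` is irrational, and then `c = 1`.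
-/

open Real Filter Topology

section Coarse

variable {X Y Z : Type*} [PseudoMetricSpace X] [PseudoMetricSpace Y] [PseudoMetricSpace Z]

theorem Close.symm {f g : X → Y} (h : Close f g) : Close g f := by
  obtain ⟨M, hM⟩ := h
  exact ⟨M, fun x => dist_comm (f x) (g x) ▸ hM x⟩

theorem Close.trans {f g h : X → Y} (hfg : Close f g) (hgh : Close g h) : Close f h := by
  obtain ⟨M, hM⟩ := hfg
  obtain ⟨N, hN⟩ := hgh
  exact ⟨M + N, fun x => (dist_triangle _ (g x) _).trans (add_le_add (hM x) (hN x))⟩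

theorem Close.comp_right {f g : Y → Z} (h : Close f g) (k : X → Y) : Close (f ∘ k) (g ∘ k) := by
  obtain ⟨M, hM⟩ := h
  exact ⟨M, fun x => hM (k x)⟩

theorem Close.comp_left {f g : X → Y} {k : Y → Z} {K : ℝ} (h : Close f g) (hk : QIEmb K k) :
    Close (k ∘ f) (k ∘ g) := by
  obtain ⟨M, hM⟩ := h
  refine ⟨K * M + K, fun x => ?_⟩
  have hK : 0 ≤ K := zero_le_one.trans hk.1.le
  calc dist (k (f x)) (k (g x)) ≤ K * dist (f x) (g x) + K := (hk.2 _ _).2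
    _ ≤ K * M + K := by gcongr; exact hM x

theorem qIsom_of_bilipschitz {g : X → Y} {K : ℝ} (hK : 1 < K)
    (hlow : ∀ x y, dist x y ≤ K * dist (g x) (g y)) (hup : ∀ x y, dist (g x) (g y) ≤ K * dist x y)
    (hg : Function.Surjective g) : QIsom K g := by
  have hK0 : 0 < K := zero_lt_one.trans hK
  refine ⟨⟨hK, fun x y => ⟨?_, ?_⟩⟩, fun y => ?_⟩
  · have := (div_le_iff₀' hK0).2 (hlow x y)
    linarith
  · linarith [hup x y]
  · obtain ⟨x, rfl⟩ := hg y
    exact ⟨x, by simpa using hK0⟩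

theorem QIEmb.not_close_const {f : ℝ → Y} {K : ℝ} (hf : QIEmb K f) (y : Y) :
    ¬ Close f (fun _ => y) := by
  rintro ⟨M, hM⟩
  have hK : 0 < K := zero_lt_one.trans hf.1
  set x : ℝ := K * (2 * M + K + 1)
  have hx : 0 < x := mul_pos hK (by linarith [(dist_nonneg (x := f 0) (y := y)).trans (hM 0)])
  have hlow := (hf.2 x 0).1
  have hfar : dist x 0 / K = 2 * M + K + 1 := by
    rw [Real.dist_eq, sub_zero, abs_of_pos hx, mul_div_cancel_left₀ _ hK.ne']
  have hnear : dist (f x) (f 0) ≤ 2 * M :=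
    (dist_triangle_right _ _ y).trans (by linarith [hM x, hM 0])
  linarith

end Coarse

theorem isQI_const_mul {t : ℝ} (ht : t ≠ 0) : IsQI (t * ·) := by
  have ht0 : 0 < |t| := abs_pos.2 ht
  have hdist : ∀ x y : ℝ, dist (t * x) (t * y) = |t| * dist x y := fun x y => by
    rw [Real.dist_eq, Real.dist_eq, ← mul_sub, abs_mul]
  refine ⟨_, qIsom_of_bilipschitz (K := |t| + |t|⁻¹ + 1)
    (by have := inv_pos.2 ht0; linarith) (fun x y => ?_)
    (fun x y => ?_) (fun y => ⟨t⁻¹ * y, mul_inv_cancel_left₀ ht y⟩)⟩ <;> rw [hdist]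
  · have : 1 ≤ (|t| + |t|⁻¹ + 1) * |t| := by
      rw [add_mul, add_mul, inv_mul_cancel₀ ht0.ne']
      nlinarith
    nlinarith [dist_nonneg (x := x) (y := y)]
  · gcongr
    linarith [inv_pos.2 ht0]

theorem exists_tendsto_div_two_pow {f : ℝ → ℝ} {M : ℝ}
    (hM : ∀ y, dist (f (2 * y)) (2 * f y) ≤ M) (x : ℝ) :
    ∃ L, Tendsto (fun n : ℕ => f (2 ^ n * x) / 2 ^ n) atTop (𝓝 L) ∧ dist (f x) L ≤ M := by
  have hstep : ∀ n : ℕ, dist (f (2 ^ n * x) / 2 ^ n) (f (2 ^ (n + 1) * x) / 2 ^ (n + 1))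
      ≤ M / 2 / 2 ^ n := fun n => by
    calc _ = dist (f (2 * (2 ^ n * x))) (2 * f (2 ^ n * x)) / 2 / 2 ^ n := by
          rw [Real.dist_eq, Real.dist_eq, div_div,
            ← abs_of_pos (by positivity : (0 : ℝ) < 2 * 2 ^ n), ← abs_div, pow_succ,
            mul_comm _ (2 : ℝ), mul_assoc, abs_sub_comm]
          congr 1
          field_simp
      _ ≤ M / 2 / 2 ^ n := by gcongr; exact hM _
  obtain ⟨L, hL⟩ := cauchySeq_tendsto_of_complete (cauchySeq_of_le_geometric_two hstep)
  exact ⟨L, hL, by simpa using dist_le_of_le_geometric_two_of_tendsto₀ hstep hL⟩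

theorem exists_close_const_mul {f : ℝ → ℝ}
    (hf : ∀ t ≠ 0, Close (f ∘ (t * ·)) ((t * ·) ∘ f)) : ∃ c, Close f (c * ·) := by
  obtain ⟨M, hM⟩ := hf 2 two_ne_zero
  choose L hL hLM using exists_tendsto_div_two_pow hM
  have hpow : Tendsto (fun n : ℕ => (2 : ℝ) ^ n) atTop atTop :=
    tendsto_pow_atTop_atTop_of_one_lt one_lt_two
  refine ⟨L 1, M, fun x => ?_⟩
  suffices L x = L 1 * x by simpa [this] using hLM x
  refine tendsto_nhds_unique (hL x) ?_
  rcases eq_or_ne x 0 with rfl | hx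
  · simpa using tendsto_const_nhds.div_atTop hpow
  obtain ⟨Mx, hMx⟩ := hf x hx
  have hsmall : Tendsto (fun n : ℕ => (f (x * 2 ^ n) - x * f (2 ^ n)) / 2 ^ n) atTop (𝓝 0) := by
    refine squeeze_zero_norm (a := fun n => Mx / 2 ^ n) (fun n => ?_)
      (tendsto_const_nhds.div_atTop hpow)
    rw [norm_div, Real.norm_eq_abs, ← Real.dist_eq, Real.norm_of_nonneg (by positivity)]
    gcongr
    exact hMx _
  convert hsmall.add ((hL 1).const_mul x) using 2 with n
  · field_simp
    ring_nf
  · ring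

theorem monotone_of_hasDerivAt_nonneg_of_ne {h h' : ℝ → ℝ} (a : ℝ) (hc : Continuous h)
    (hd : ∀ x ≠ a, HasDerivAt h (h' x) x) (hn : ∀ x ≠ a, 0 ≤ h' x) : Monotone h := by
  refine MonotoneOn.Iic_union_Ici (a := a) ?_ ?_
  · refine monotoneOn_of_hasDerivWithinAt_nonneg (f' := h') (convex_Iic a) hc.continuousOn
      (fun x hx => ?_) (fun x hx => ?_) <;> rw [interior_Iic] at hx
    exacts [(hd x hx.ne).hasDerivWithinAt, hn x hx.ne]
  · refine monotoneOn_of_hasDerivWithinAt_nonneg (f' := h') (convex_Ici a) hc.continuousOn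
      (fun x hx => ?_) (fun x hx => ?_) <;> rw [interior_Ici] at hx
    exacts [(hd x hx.ne').hasDerivWithinAt, hn x hx.ne']

theorem mul_sub_le_sub_le_mul_sub_of_hasDerivAt_of_ne {g g' : ℝ → ℝ} {a m M : ℝ}
    (hc : Continuous g) (hd : ∀ x ≠ a, HasDerivAt g (g' x) x)
    (hb : ∀ x ≠ a, m ≤ g' x ∧ g' x ≤ M) {u v : ℝ} (huv : u ≤ v) :
    m * (v - u) ≤ g v - g u ∧ g v - g u ≤ M * (v - u) := by
  have hlow := monotone_of_hasDerivAt_nonneg_of_ne a (hc.sub (continuous_const_mul m))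
    (fun x hx => (hd x hx).sub ((hasDerivAt_id x).const_mul m))
    (fun x hx => by simpa using (hb x hx).1) huv
  have hup := monotone_of_hasDerivAt_nonneg_of_ne a ((continuous_const_mul M).sub hc)
    (fun x hx => ((hasDerivAt_id x).const_mul M).sub (hd x hx))
    (fun x hx => by simpa using (hb x hx).2) huv
  simp only [Pi.sub_apply] at hlow hup
  constructor <;> linarith

noncomputable def oscMap (ω x : ℝ) : ℝ := x + |x| / 8 * sin (ω * log x)

theorem oscMap_zero (ω : ℝ) : oscMap ω 0 = 0 := by simp [oscMap]

theorem hasDerivAt_oscMap (ω : ℝ) {x : ℝ} (hx : x ≠ 0) :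
    HasDerivAt (oscMap ω)
      (1 + SignType.sign x * (sin (ω * log x) + ω * cos (ω * log x)) / 8) x := by
  have := (hasDerivAt_id x).add (((hasDerivAt_abs hx).div_const 8).mul
    (((hasDerivAt_log hx).const_mul ω).sin))
  refine this.congr_deriv ?_
  rcases hx.lt_or_gt with hx | hx
  · simp [hx, abs_of_neg]
    field_simp
    ring
  · simp [hx, abs_of_pos]
    field_simp

theorem continuous_oscMap (ω : ℝ) : Continuous (oscMap ω) := by
  refine continuous_iff_continuousAt.2 fun x => ?_
  rcases eq_or_ne x 0 with rfl | hx
  · have hsmall : ∀ y, ‖oscMap ω y‖ ≤ 9 / 8 * |y| := fun y => by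
      have := abs_sin_le_one (ω * log y)
      calc ‖oscMap ω y‖ ≤ |y| + |(|y| / 8 * sin (ω * log y))| := abs_add_le _ _
        _ = |y| + |y| / 8 * |sin (ω * log y)| := by rw [abs_mul, abs_div, abs_abs]; norm_num
        _ ≤ 9 / 8 * |y| := by nlinarith [abs_nonneg y]
    rw [ContinuousAt, oscMap_zero]
    exact squeeze_zero_norm hsmall (by simpa using (continuous_abs.const_mul (9 / 8 : ℝ)).tendsto 0)
  · exact (hasDerivAt_oscMap ω hx).continuousAt

theorem oscMap_sub_bounds {ω : ℝ} (hω : |ω| ≤ 3) {u v : ℝ} (huv : u ≤ v) :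
    (v - u) / 2 ≤ oscMap ω v - oscMap ω u ∧ oscMap ω v - oscMap ω u ≤ 3 / 2 * (v - u) := by
  have hb : ∀ x ≠ 0, 1 / 2 ≤ 1 + SignType.sign x * (sin (ω * log x) + ω * cos (ω * log x)) / 8 ∧
      1 + SignType.sign x * (sin (ω * log x) + ω * cos (ω * log x)) / 8 ≤ 3 / 2 := fun x hx => by
    have hsign : |(SignType.sign x : ℝ)| ≤ 1 := by
      rcases hx.lt_or_gt with h | h <;> simp [h]
    have hwave : |sin (ω * log x) + ω * cos (ω * log x)| ≤ 4 :=
      calc _ ≤ |sin (ω * log x)| + |ω| * |cos (ω * log x)| := by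
            rw [← abs_mul]; exact abs_add_le _ _
        _ ≤ 1 + 3 * 1 := by
            gcongr
            exacts [abs_sin_le_one _, abs_cos_le_one _]
        _ = 4 := by norm_num
    have := abs_le.1 (show |(SignType.sign x : ℝ) * (sin (ω * log x) + ω * cos (ω * log x))| ≤ 4 by
      rw [abs_mul]; nlinarith [abs_nonneg (sin (ω * log x) + ω * cos (ω * log x))])
    constructor <;> linarith [this.1, this.2]
  have := mul_sub_le_sub_le_mul_sub_of_hasDerivAt_of_ne (continuous_oscMap ω)
    (fun x hx => hasDerivAt_oscMap ω hx) hb huv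
  constructor <;> linarith [this.1, this.2]

theorem surjective_oscMap {ω : ℝ} (hω : |ω| ≤ 3) : Function.Surjective (oscMap ω) := by
  refine (continuous_oscMap ω).surjective ?_ ?_
  · refine tendsto_atTop_mono' _ ?_ (tendsto_id.atTop_div_const two_pos)
    filter_upwards [eventually_ge_atTop 0] with x hx
    simpa [oscMap_zero] using (oscMap_sub_bounds hω hx).1
  · refine tendsto_atBot_mono' _ ?_ (tendsto_id.atBot_div_const two_pos)
    filter_upwards [eventually_le_atBot 0] with x hx
    have := (oscMap_sub_bounds hω hx).1
    rw [oscMap_zero] at this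
    simp only [id_eq]
    linarith

theorem qIsom_oscMap {ω : ℝ} (hω : |ω| ≤ 3) : QIsom 2 (oscMap ω) := by
  have hbi : ∀ u v, dist u v ≤ 2 * dist (oscMap ω u) (oscMap ω v) ∧
      dist (oscMap ω u) (oscMap ω v) ≤ 2 * dist u v := fun u v => by
    wlog huv : u ≤ v generalizing u v
    · simpa only [dist_comm] using this v u (le_of_not_ge huv)
    obtain ⟨hlow, hup⟩ := oscMap_sub_bounds hω huv
    rw [dist_comm u, dist_comm (oscMap ω u), Real.dist_eq, Real.dist_eq,
      abs_of_nonneg (sub_nonneg.2 huv), abs_of_nonneg (by linarith)]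
    constructor <;> linarith
  exact qIsom_of_bilipschitz one_lt_two (fun u v => (hbi u v).1) (fun u v => (hbi u v).2)
    (surjective_oscMap hω)

-- Mathlib's `log c` is `log |c|`, so this also covers `c < 0`.
theorem eq_abs_mul_cos_of_close_oscMap {ω c : ℝ} (hω : 0 < ω) (hc : c ≠ 0)
    (h : Close ((c * ·) ∘ oscMap ω) (oscMap ω ∘ (c * ·))) : c = |c| * cos (ω * log c) := by
  obtain ⟨C, hC⟩ := h
  set x : ℕ → ℝ := fun n => exp ((π / 2 + n * (2 * π)) / ω)
  have hx : ∀ n, 0 < x n := fun n => exp_pos _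
  have hlog : ∀ n, ω * log (x n) = π / 2 + n * (2 * π) := fun n => by
    simp only [x, log_exp]
    field_simp
  have hgap : ∀ n, dist (c * oscMap ω (x n)) (oscMap ω (c * x n))
      = x n * (|c - |c| * cos (ω * log c)| / 8) := fun n => by
    have h1 : sin (ω * log (x n)) = 1 := by rw [hlog, sin_add_nat_mul_two_pi, sin_pi_div_two]
    have h2 : sin (ω * log (c * x n)) = cos (ω * log c) := by
      rw [log_mul hc (hx n).ne', mul_add, hlog, ← add_assoc, sin_add_nat_mul_two_pi,
        sin_add_pi_div_two]
    have hdiff : c * oscMap ω (x n) - oscMap ω (c * x n)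
        = x n * ((c - |c| * cos (ω * log c)) / 8) := by
      rw [oscMap, oscMap, h1, h2, abs_mul, abs_of_pos (hx n)]
      ring
    rw [Real.dist_eq, hdiff, abs_mul, abs_div, abs_of_pos (hx n),
      abs_of_pos (by norm_num : (0 : ℝ) < 8)]
  have htend : Tendsto x atTop atTop :=
    tendsto_exp_atTop.comp <| Tendsto.atTop_div_const hω <| tendsto_atTop_add_const_left _ _ <|
      tendsto_natCast_atTop_atTop.atTop_mul_const (by positivity)
  by_contra hne
  have hgap_pos : 0 < |c - |c| * cos (ω * log c)| / 8 := by
    have := abs_pos.2 (sub_ne_zero.2 hne)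
    positivity
  obtain ⟨n, hn⟩ := ((htend.atTop_mul_const hgap_pos).eventually_gt_atTop C).exists
  exact hn.not_ge ((hgap n).symm.trans_le (hC (x n)))

theorem sin_eq_zero_of_eq_abs_mul_cos {c t : ℝ} (hc : c ≠ 0) (h : c = |c| * cos t) :
    sin t = 0 := by
  have hcos : |cos t| = 1 := by
    have := congrArg abs h
    rw [abs_mul, abs_abs] at this
    exact (mul_eq_left₀ (abs_ne_zero.2 hc)).1 this.symm
  have : sin t ^ 2 = 0 := by nlinarith [sin_sq_add_cos_sq t, sq_abs (cos t)]
  exact pow_eq_zero_iff two_ne_zero |>.1 this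

theorem eq_zero_of_sin_eq_zero_of_sin_mul_eq_zero {r a : ℝ} (hr : Irrational r) (ha : sin a = 0)
    (hra : sin (r * a) = 0) : a = 0 := by
  obtain ⟨k, rfl⟩ := sin_eq_zero_iff.1 ha
  obtain ⟨m, hm⟩ := sin_eq_zero_iff.1 hra
  rcases eq_or_ne k 0 with rfl | hk
  · simp
  · exact ((hr.mul_intCast hk).ne_int m (mul_right_cancel₀ pi_ne_zero (by rw [mul_assoc, hm]))).elim

theorem eq_one_of_eq_abs_mul_cos {r c : ℝ} (hr : Irrational r) (hc : c ≠ 0)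
    (h1 : c = |c| * cos (log c)) (h2 : c = |c| * cos (r * log c)) : c = 1 := by
  have hlog : log c = 0 := eq_zero_of_sin_eq_zero_of_sin_mul_eq_zero hr
    (sin_eq_zero_of_eq_abs_mul_cos hc h1) (sin_eq_zero_of_eq_abs_mul_cos hc h2)
  rw [hlog, cos_zero, mul_one] at h1
  have hpos : 0 < c := by rw [h1]; exact abs_pos.2 hc
  exact eq_one_of_pos_of_log_eq_zero hpos hlog

/-- The center of the group `QI(ℝ)` of quasi-isometry classes of the real line is
trivial: any self-quasi-isometry of `ℝ` whose class commutes with every class is within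
bounded distance of the identity. -/
theorem center_QI_real_trivial (f : ℝ → ℝ) (hf : IsQI f)
    (hcentral : ∀ g : ℝ → ℝ, IsQI g → Close (f ∘ g) (g ∘ f)) :
    Close f (id : ℝ → ℝ) := by
  obtain ⟨K, hK, -⟩ := hf
  obtain ⟨c, hc⟩ := exists_close_const_mul fun t ht => hcentral _ (isQI_const_mul ht)
  have hc0 : c ≠ 0 := by
    rintro rfl
    exact hK.not_close_const 0 (by simpa using hc)
  have hcos : ∀ ω, 0 < ω → ω ≤ 3 → c = |c| * cos (ω * log c) := fun ω hω hω3 => by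
    have hosc := qIsom_oscMap (abs_le.2 ⟨by linarith, hω3⟩)
    exact eq_abs_mul_cos_of_close_oscMap hω hc0
      (((hc.comp_right _).symm.trans (hcentral _ ⟨2, hosc⟩)).trans (hc.comp_left hosc.1))
  have h1 := hcos 1 one_pos (by norm_num)
  rw [one_mul] at h1
  have h2 := hcos √2 (by positivity) (by nlinarith [sq_sqrt zero_le_two, sqrt_nonneg 2])
  obtain rfl := eq_one_of_eq_abs_mul_cos irrational_sqrt_two hc0 h1 h2
  simp only [one_mul] at hc
  exact hc
end
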